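/- arXiv:2206.12979 — 2 statements merged into one kernel-verified Lean document; each statement's English description precedes it below -/
import Mathlib

section
/- Let H be a finite forest with a proper 2-coloring of its vertices into 'left' and 'right' classes, and suppose H has at least one edge, an injective labeling of its edges by reals, and no left vertex of H is a leaf. Then H has a right leaf y whose unique neighbor w satisfies: the edge yw has either the smallest or the largest label among all edges incident to w. -/
/-!
Take a leaf `y` with neighbour `w`. If the label of `yw` is not extremal at `w`, then `w` has
edges with a smaller and with a larger label; delete `yw`. Then `w` is still not a leaf, so the
leaves of the smaller forest are leaves of `H`, and by induction one of them, `y'` with neighbour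
`w'`, has an extremal label at `w'`. Putting `yw` back keeps this extremal, because its label lies
between two labels already present at `w`. Leaves are right vertices since no left vertex is one.
-/

open SimpleGraph

theorem IsExtrOn.insert_of_le_of_le {ι α : Type*} [Preorder α] {f : ι → α} {s : Set ι}
    {a b e₁ e₂ : ι} (h : IsExtrOn f s a) (he₁ : e₁ ∈ s) (he₂ : e₂ ∈ s) (h₁ : f e₁ ≤ f b)
    (h₂ : f b ≤ f e₂) : IsExtrOn f (insert b s) a := by
  rcases h with h | h
  · refine IsMinOn.isExtr <| isMinOn_iff.2 <| Set.forall_mem_insert.2 ⟨?_, isMinOn_iff.1 h⟩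
    exact (isMinOn_iff.1 h e₁ he₁).trans h₁
  · refine IsMaxOn.isExtr <| isMaxOn_iff.2 <| Set.forall_mem_insert.2 ⟨?_, isMaxOn_iff.1 h⟩
    exact h₂.trans (isMaxOn_iff.1 h e₂ he₂)

theorem exists_lt_and_exists_gt_of_not_isExtrOn {ι α : Type*} [LinearOrder α] {f : ι → α}
    {s : Set ι} {a : ι} (h : ¬IsExtrOn f s a) : (∃ e ∈ s, f e < f a) ∧ ∃ e ∈ s, f a < f e := by
  change ¬(IsMinOn f s a ∨ IsMaxOn f s a) at h
  simpa only [not_or, isMinOn_iff, isMaxOn_iff, not_forall, not_le, exists_prop] using h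

namespace SimpleGraph

variable {V : Type*} {G : SimpleGraph V}

theorem adj_of_neighborSet_eq_singleton {v w : V} (h : G.neighborSet v = {w}) : G.Adj v w := by
  rw [← mem_neighborSet, h]
  exact Set.mem_singleton w

theorem neighborSet_deleteEdges_singleton_of_notMem {v : V} {e : Sym2 V} (hv : v ∉ e) :
    (G.deleteEdges {e}).neighborSet v = G.neighborSet v := by
  ext u
  simp only [mem_neighborSet, deleteEdges_adj, Set.mem_singleton_iff, and_iff_left_iff_imp]
  rintro - rfl
  exact hv (Sym2.mem_mk_left v u)

theorem incidenceSet_deleteEdges (s : Set (Sym2 V)) (v : V) :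
    (G.deleteEdges s).incidenceSet v = G.incidenceSet v \ s := by
  ext e
  simp only [incidenceSet, edgeSet_deleteEdges, Set.mem_sdiff, Set.mem_ofPred_eq]
  tauto

theorem incidenceSet_subsingleton_of_neighborSet_eq_singleton {v w : V}
    (h : G.neighborSet v = {w}) : (G.incidenceSet v).Subsingleton := by
  classical
  have : Subsingleton (G.neighborSet v) := by rw [h]; infer_instance
  intro e₁ he₁ e₂ he₂
  exact congrArg Subtype.val <|
    (G.incidenceSetEquivNeighborSet v).subsingleton.elim ⟨e₁, he₁⟩ ⟨e₂, he₂⟩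

/-- Deleting the edge of a leaf `y` creates no new leaf, as long as its neighbour `w` keeps
two edges. -/
theorem notMem_of_neighborSet_deleteEdges_eq_singleton {y w y' w' : V}
    (hyw : G.neighborSet y = {w}) (hw : ((G.deleteEdges {s(y, w)}).incidenceSet w).Nontrivial)
    (hyw' : (G.deleteEdges {s(y, w)}).neighborSet y' = {w'}) : y' ∉ s(y, w) := by
  rw [Sym2.mem_iff]
  rintro (rfl | rfl)
  · obtain ⟨hadj, hne⟩ := deleteEdges_adj.1 (adj_of_neighborSet_eq_singleton hyw')
    rw [← mem_neighborSet, hyw, Set.mem_singleton_iff] at hadj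
    exact hne (hadj ▸ rfl)
  · exact hw.not_subsingleton (incidenceSet_subsingleton_of_neighborSet_eq_singleton hyw')

theorem IsAcyclic.exists_neighborSet_eq_singleton [Finite V] (hG : G.IsAcyclic)
    (hE : G.edgeSet.Nonempty) : ∃ y w, G.neighborSet y = {w} := by
  obtain ⟨a, b, hab⟩ := ne_bot_iff_exists_adj.1 (edgeSet_nonempty.1 hE)
  have : Nonempty V := ⟨a⟩
  obtain ⟨u, v, p, hp, hmax⟩ := Walk.exists_isPath_forall_isPath_length_le_length G
  have hnil : ¬p.Nil := by
    rw [← Walk.length_eq_zero_iff]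
    have := hmax _ _ _ hab.isPath_toWalk
    simp only [Adj.toWalk, Walk.length_cons, Walk.length_nil] at this
    omega
  refine ⟨u, p.snd, Set.eq_singleton_iff_unique_mem.2 ⟨p.adj_snd hnil, fun x hx => ?_⟩⟩
  refine hG.eq_snd_of_adj_start hp hx (by_contra fun hxp => ?_)
  have := hmax _ _ _ (hp.cons hxp (h := G.adj_symm hx))
  simp at this

theorem IsAcyclic.exists_neighborSet_eq_singleton_isExtrOn {α : Type*} [Finite V]
    [LinearOrder α] (hG : G.IsAcyclic) (hE : G.edgeSet.Nonempty) (L : Sym2 V → α) :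
    ∃ y w, G.neighborSet y = {w} ∧ IsExtrOn L (G.incidenceSet w) s(y, w) := by
  induction G using WellFoundedLT.induction with | ind G ih => ?_
  obtain ⟨y, w, hyw⟩ := hG.exists_neighborSet_eq_singleton hE
  by_cases hext : IsExtrOn L (G.incidenceSet w) s(y, w)
  · exact ⟨y, w, hyw, hext⟩
  obtain ⟨⟨e₁, he₁, hlt₁⟩, ⟨e₂, he₂, hlt₂⟩⟩ := exists_lt_and_exists_gt_of_not_isExtrOn hext
  set f := s(y, w)
  set G' := G.deleteEdges {f}
  have hG' : G' < G := (deleteEdges_le _).lt_of_ne fun h => by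
    have : f ∉ G.edgeSet := by simpa [G', edgeSet_deleteEdges] using congrArg (f ∈ ·.edgeSet) h
    exact this (adj_of_neighborSet_eq_singleton hyw)
  have he₁' : e₁ ∈ G'.incidenceSet w := by
    rw [incidenceSet_deleteEdges]; exact ⟨he₁, fun h => hlt₁.ne (congrArg L h)⟩
  have he₂' : e₂ ∈ G'.incidenceSet w := by
    rw [incidenceSet_deleteEdges]; exact ⟨he₂, fun h => hlt₂.ne' (congrArg L h)⟩
  obtain ⟨y', w', hyw', hext'⟩ :=
    ih G' hG' (hG.anti hG'.le) ⟨e₁, incidenceSet_subset _ _ he₁'⟩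
  have hy'f : y' ∉ f := notMem_of_neighborSet_deleteEdges_eq_singleton hyw
    ⟨e₁, he₁', e₂, he₂', fun h => (hlt₁.trans hlt₂).ne (congrArg L h)⟩ hyw'
  have hleaf : G.neighborSet y' = {w'} := by
    rw [← neighborSet_deleteEdges_singleton_of_notMem hy'f]; exact hyw'
  refine ⟨y', w', hleaf, ?_⟩
  rcases eq_or_ne w' w with rfl | hw'w
  · refine (hext'.insert_of_le_of_le he₁' he₂' hlt₁.le hlt₂.le).on_subset ?_
    rw [incidenceSet_deleteEdges, Set.insert_sdiff_singleton]
    exact Set.subset_insert _ _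
  · have hw'y : w' ≠ y := by
      rintro rfl
      have : y' ∈ G.neighborSet w' := (adj_of_neighborSet_eq_singleton hleaf).symm
      rw [hyw, Set.mem_singleton_iff] at this
      exact hy'f (this ▸ Sym2.mem_mk_right _ _)
    refine hext'.on_subset ?_
    rw [incidenceSet_deleteEdges, Set.sdiff_singleton_eq_self]
    exact fun h => (Sym2.mem_iff.1 h.2).elim hw'y hw'w

end SimpleGraph

theorem stmt4_general {V : Type} [Fintype V] (H : SimpleGraph V) (hforest : H.IsAcyclic)
    (color : V → Bool) (hE : H.edgeSet.Nonempty) (L : Sym2 V → ℝ)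
    (hleft : ∀ v, color v = true → (H.neighborSet v).ncard ≠ 1) :
    ∃ y w, color y = false ∧ (H.neighborSet y).ncard = 1 ∧ H.Adj y w ∧
      ((∀ e ∈ H.incidenceSet w, L s(y, w) ≤ L e) ∨
       (∀ e ∈ H.incidenceSet w, L e ≤ L s(y, w))) := by
  obtain ⟨y, w, hyw, hext⟩ := hforest.exists_neighborSet_eq_singleton_isExtrOn hE L
  have hy : (H.neighborSet y).ncard = 1 := by rw [hyw, Set.ncard_singleton]
  refine ⟨y, w, Bool.eq_false_iff.2 fun h => hleft y h hy, hy,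
    adj_of_neighborSet_eq_singleton hyw, ?_⟩
  rw [← isMinOn_iff, ← isMaxOn_iff]
  exact hext

/-- In a finite forest `H` with a proper 2-coloring (left = `true`, right = `false`),
at least one edge, distinctly labeled edges, and no left leaf, there is a right leaf `y`
whose unique neighbor `w` is joined to `y` by an edge whose label is extremal
(smallest or largest) among the edges incident to `w`. -/
theorem stmt4 {V : Type} [Fintype V] (H : SimpleGraph V) (hforest : H.IsAcyclic)
    (color : V → Bool) (hproper : ∀ a b, H.Adj a b → color a ≠ color b)
    (hE : H.edgeSet.Nonempty) (L : Sym2 V → ℝ) (hL : Set.InjOn L H.edgeSet)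
    (hleft : ∀ v, color v = true → (H.neighborSet v).ncard ≠ 1) :
    ∃ y w, color y = false ∧ (H.neighborSet y).ncard = 1 ∧ H.Adj y w ∧
      ((∀ e ∈ H.incidenceSet w, L s(y, w) ≤ L e) ∨
       (∀ e ∈ H.incidenceSet w, L e ≤ L s(y, w))) :=
  stmt4_general H hforest color hE L hleft
end

section
/- Let S be a finite set of integers contained in {1,…,m} with |S| = d ≥ 1, let k ≥ 2, f ≥ 0, m ≥ k be integers, and c = ⌈d/(10k)⌉. Suppose S cannot be covered, up to at most d/10 uncovered elements, by k−1 intervals of length f each. Then there exist values a₁ < a₂ < ⋯ < a_k in S with a_i > a_{i-1} + f for all 2 ≤ i ≤ k, such that for every choice of integers t_i ∈ [a_i, a_i+f] (1 ≤ i ≤ k−1), together with t₀ = 0 and t_k = m, the resulting grid satisfies: each of the k classes contains at least c elements of S. In particular, at least (f+1)^{k-1} grids t satisfy min_{1≤j≤k} |{s ∈ S : t_{j-1} < s ≤ t_j}| ≥ c. -/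
theorem step_lemma (c : ℕ) (hc : 1 ≤ c) (T : Finset ℤ) (hT : c ≤ T.card) :
    ∃ y ∈ T, c ≤ (T.filter (· ≤ y)).card ∧ (T.filter (· < y)).card < c := by
  have hne : T.Nonempty := Finset.card_pos.mp (lt_of_lt_of_le hc hT)
  set C := T.filter (fun y => c ≤ (T.filter (· ≤ y)).card) with hC
  have hCne : C.Nonempty := by
    refine ⟨T.max' hne, Finset.mem_filter.mpr ⟨T.max'_mem hne, ?_⟩⟩
    have : T.filter (· ≤ T.max' hne) = T := Finset.filter_eq_self.mpr fun x hx => T.le_max' x hx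
    rw [this]; exact hT
  refine ⟨C.min' hCne, (Finset.mem_filter.mp (C.min'_mem hCne)).1,
    (Finset.mem_filter.mp (C.min'_mem hCne)).2, ?_⟩
  by_contra h
  push_neg at h
  set D := T.filter (· < C.min' hCne) with hD
  have hDne : D.Nonempty := Finset.card_pos.mp (lt_of_lt_of_le hc h)
  have hy' : D.max' hDne ∈ C := by
    refine Finset.mem_filter.mpr ⟨(Finset.mem_filter.mp (D.max'_mem hDne)).1, ?_⟩
    refine le_trans h (Finset.card_le_card ?_)
    intro z hz
    exact Finset.mem_filter.mpr ⟨(Finset.mem_filter.mp hz).1, D.le_max' z hz⟩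
  have h1 := C.min'_le _ hy'
  have h2 := (Finset.mem_filter.mp (D.max'_mem hDne)).2
  omega



/-- The 'wild vertex' lemma: if `S ⊆ {1,…,m}` with `|S| = d ≥ 1` cannot be covered, up
to at most `d/10` uncovered elements, by `k-1` intervals of length `f`, then there are
`a 1 < ⋯ < a k` in `S` with gaps `> f` such that every grid with `t i ∈ [a i, a i + f]`
has at least `c = ⌈d/(10k)⌉` elements of `S` in each of its `k` classes; in particular
at least `(f+1)^(k-1)` grids have this property. -/
theorem stmt11 (S : Finset ℤ) (d k : ℕ) (f m : ℤ) (c : ℕ)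
    (hS : ∀ x ∈ S, 1 ≤ x ∧ x ≤ m) (hd : S.card = d) (hd1 : 1 ≤ d) (hk : 2 ≤ k)
    (hf : 0 ≤ f) (hm : (k : ℤ) ≤ m)
    (hc : c = ⌈(d : ℚ) / (10 * k)⌉₊)
    (hcov : ¬ ∃ b : Fin (k - 1) → ℤ,
      10 * {x : ℤ | x ∈ S ∧ ∀ i, ¬(b i ≤ x ∧ x ≤ b i + f)}.ncard ≤ d) :
    ∃ a : ℕ → ℤ,
      (∀ i, 1 ≤ i → i ≤ k → a i ∈ S) ∧
      (∀ i, 2 ≤ i → i ≤ k → a (i - 1) + f < a i) ∧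
      (∀ t : ℕ → ℤ, t 0 = 0 → t k = m →
        (∀ i, 1 ≤ i → i ≤ k - 1 → a i ≤ t i ∧ t i ≤ a i + f) →
        ∀ j, 1 ≤ j → j ≤ k →
          c ≤ {x : ℤ | x ∈ S ∧ t (j - 1) < x ∧ x ≤ t j}.ncard) ∧
      (f + 1) ^ (k - 1) ≤
        ({t : Fin (k + 1) → ℤ | StrictMono t ∧ t 0 = 0 ∧ t (Fin.last k) = m ∧
          ∀ j : Fin k,
            c ≤ {x : ℤ | x ∈ S ∧ t j.castSucc < x ∧ x ≤ t j.succ}.ncard}.ncard : ℤ) := by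
  have hc1 : 1 ≤ c := by
    rw [hc, Nat.one_le_ceil_iff]
    have h1 : (0:ℚ) < d := by exact_mod_cast hd1
    have h2 : (0:ℚ) < 10 * k := by
      have : (0:ℚ) < k := by exact_mod_cast lt_of_lt_of_le two_pos hk
      linarith
    positivity
  -- key arithmetic : 10 * k * (c-1) < d
  have hkey : 10 * k * (c - 1) < d := by
    have hq : ((c - 1 : ℕ) : ℚ) < (d:ℚ) / (10 * k) := by
      by_contra hle
      push_neg at hle
      have : ⌈(d : ℚ) / (10 * k)⌉₊ ≤ c - 1 := Nat.ceil_le.mpr hle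
      omega
    have h2 : (0:ℚ) < 10 * k := by
      have : (0:ℚ) < k := by exact_mod_cast lt_of_lt_of_le two_pos hk
      linarith
    rw [div_eq_mul_inv] at hq
    have := (lt_div_iff₀ h2).mp (by rw [div_eq_mul_inv]; exact hq)
    have : ((10 * k * (c-1) : ℕ) : ℚ) < (d : ℚ) := by push_cast; linarith
    exact_mod_cast this
  -- construction
  let T : ℤ → Finset ℤ := fun p => S.filter (fun s => p + f < s)
  let g : ℤ → ℤ := fun p => if h : c ≤ (T p).card then (step_lemma c hc1 (T p) h).choose else 0
  obtain ⟨a, ha0, hasucc⟩ : ∃ a : ℕ → ℤ, a 0 = -f ∧ ∀ n, a (n+1) = g (a n) :=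
    ⟨fun n => Nat.rec (-f) (fun _ p => g p) n, rfl, fun _ => rfl⟩
  have hstep : ∀ n, c ≤ (T (a n)).card →
      a (n+1) ∈ S ∧ a n + f < a (n+1) ∧ c ≤ ((T (a n)).filter (· ≤ a (n+1))).card ∧
        ((T (a n)).filter (· < a (n+1))).card < c := by
    intro n h
    have heq : a (n+1) = (step_lemma c hc1 (T (a n)) h).choose := by
      rw [hasucc]
      simp only [g, dif_pos h]
    obtain ⟨hy, h1, h2⟩ := (step_lemma c hc1 (T (a n)) h).choose_spec
    rw [← heq] at hy h1 h2
    have := Finset.mem_filter.mp hy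
    exact ⟨this.1, this.2, h1, h2⟩
  -- all steps succeed
  have hGood : ∀ i < k, c ≤ (T (a i)).card := by
    by_contra hbad
    push_neg at hbad
    have hex : ∃ j, j < k ∧ (T (a j)).card < c := hbad
    set j := Nat.find hex with hj
    obtain ⟨hjk, hjfail⟩ := Nat.find_spec hex
    rw [← hj] at hjk hjfail
    have hmin : ∀ i < j, c ≤ (T (a i)).card := by
      intro i hi
      have := Nat.find_min hex hi
      push_neg at this
      exact this (lt_trans hi hjk)
    -- covering sets
    set U : ℕ → Finset ℤ := fun i =>
      if i < j then (T (a i)).filter (· < a (i+1)) else T (a i) with hU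
    set W := (Finset.range (j+1)).biUnion U with hW
    have hUcard : ∀ i ∈ Finset.range (j+1), (U i).card ≤ c - 1 := by
      intro i hi
      rw [hU]; beta_reduce
      by_cases hij : i < j
      · rw [if_pos hij]
        have := (hstep i (hmin i hij)).2.2.2
        omega
      · rw [if_neg hij]
        have : i = j := by simp at hi; omega
        rw [this]; omega
    have hWcard : W.card ≤ (j+1) * (c-1) := by
      calc W.card ≤ ∑ i ∈ Finset.range (j+1), (U i).card := Finset.card_biUnion_le
        _ ≤ ∑ _i ∈ Finset.range (j+1), (c-1) := Finset.sum_le_sum hUcard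
        _ = (j+1) * (c-1) := by rw [Finset.sum_const, Finset.card_range, smul_eq_mul]
    -- the covering functions
    set b : Fin (k-1) → ℤ := fun i => a (min (i.1+1) j) with hb
    have hsub : {x : ℤ | x ∈ S ∧ ∀ i, ¬(b i ≤ x ∧ x ≤ b i + f)} ⊆ ↑W := by
      rintro x ⟨hxS, hxb⟩
      have hx1 : 1 ≤ x := (hS x hxS).1
      by_cases hcase : a j + f < x
      · refine Finset.mem_coe.mpr (Finset.mem_biUnion.mpr ⟨j, Finset.self_mem_range_succ j, ?_⟩)
        rw [hU]; beta_reduce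
        rw [if_neg (lt_irrefl j)]
        exact Finset.mem_filter.mpr ⟨hxS, hcase⟩
      · push_neg at hcase
        have hxa0 : ¬ (x ≤ a 0 + f) := by rw [ha0]; omega
        have hexn : ∃ n, x ≤ a n + f := ⟨j, hcase⟩
        set n := Nat.find hexn with hn
        have hnspec : x ≤ a n + f := Nat.find_spec hexn
        have hn1 : 1 ≤ n := by
          rcases Nat.eq_zero_or_pos n with h0 | h1
          · exact absurd (h0 ▸ hnspec) hxa0
          · exact h1
        have hnj : n ≤ j := Nat.find_le hcase
        have hj1 : 1 ≤ j := le_trans hn1 hnj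
        have hprev : a (n-1) + f < x := by
          have := Nat.find_min hexn (m := n - 1) (by omega)
          omega
        -- interval index n-1 in Fin (k-1)
        have hnk : n - 1 < k - 1 := by omega
        have hbval : b ⟨n-1, hnk⟩ = a n := by
          rw [hb]
          simp only
          congr 1
          omega
        have hxn : x < a n := by
          have := hxb ⟨n-1, hnk⟩
          rw [hbval] at this
          push_neg at this
          exact lt_of_not_ge fun h => absurd hnspec (not_le.mpr (this h))
        refine Finset.mem_coe.mpr (Finset.mem_biUnion.mpr ⟨n-1, Finset.mem_range.mpr (by omega), ?_⟩)
        rw [hU]; beta_reduce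
        rw [if_pos (by omega : n - 1 < j)]
        refine Finset.mem_filter.mpr ⟨Finset.mem_filter.mpr ⟨hxS, hprev⟩, ?_⟩
        show x < a ((n-1)+1)
        have : (n-1)+1 = n := by omega
        rw [this]; exact hxn
    have hVle : {x : ℤ | x ∈ S ∧ ∀ i, ¬(b i ≤ x ∧ x ≤ b i + f)}.ncard ≤ W.card := by
      calc _ ≤ (↑W : Set ℤ).ncard := Set.ncard_le_ncard hsub W.finite_toSet
        _ = W.card := Set.ncard_coe_finset W
    refine hcov ⟨b, ?_⟩
    have h1 : 10 * (j+1) * (c-1) ≤ 10 * k * (c-1) :=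
      Nat.mul_le_mul_right _ (Nat.mul_le_mul_left _ (by omega))
    calc 10 * {x : ℤ | x ∈ S ∧ ∀ i, ¬(b i ≤ x ∧ x ≤ b i + f)}.ncard
        ≤ 10 * ((j+1) * (c-1)) := Nat.mul_le_mul_left _ (le_trans hVle hWcard)
      _ = 10 * (j+1) * (c-1) := by ring
      _ ≤ 10 * k * (c-1) := h1
      _ ≤ d := le_of_lt hkey
  -- basic properties of a
  have hmem : ∀ i, 1 ≤ i → i ≤ k → a i ∈ S := by
    intro i h1 h2
    obtain ⟨n, rfl⟩ : ∃ n, i = n + 1 := ⟨i - 1, by omega⟩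
    exact (hstep n (hGood n (by omega))).1
  have hgap : ∀ i, 1 ≤ i → i ≤ k → a (i-1) + f < a i := by
    intro i h1 h2
    obtain ⟨n, rfl⟩ : ∃ n, i = n + 1 := ⟨i - 1, by omega⟩
    simpa using (hstep n (hGood n (by omega))).2.1
  have hcnt : ∀ i, 1 ≤ i → i ≤ k → c ≤ ((T (a (i-1))).filter (fun x : ℤ => x ≤ a i)).card := by
    intro i h1 h2
    obtain ⟨n, rfl⟩ : ∃ n, i = n + 1 := ⟨i - 1, by omega⟩
    simpa using (hstep n (hGood n (by omega))).2.2.1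
  have ha1 : 1 ≤ a 1 := (hS _ (hmem 1 le_rfl (by omega))).1
  have hak : a k ≤ m := (hS _ (hmem k (by omega) le_rfl)).2
  -- bullet 3
  have key3 : ∀ t : ℕ → ℤ, t 0 = 0 → t k = m →
      (∀ i, 1 ≤ i → i ≤ k - 1 → a i ≤ t i ∧ t i ≤ a i + f) →
      ∀ j, 1 ≤ j → j ≤ k →
        c ≤ {x : ℤ | x ∈ S ∧ t (j - 1) < x ∧ x ≤ t j}.ncard := by
    intro t ht0 htk htb j hj1 hjk
    have htle : t (j-1) ≤ a (j-1) + f := by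
      rcases Nat.eq_or_lt_of_le hj1 with h | h
      · rw [← h]; simp [ht0, ha0]
      · exact (htb (j-1) (by omega) (by omega)).2
    have htge : a j ≤ t j := by
      rcases Nat.eq_or_lt_of_le hjk with h | h
      · rw [h, htk]; exact h ▸ hak
      · exact (htb j hj1 (by omega)).1
    have hsub : (↑((T (a (j-1))).filter (fun x : ℤ => x ≤ a j)) : Set ℤ) ⊆
        {x : ℤ | x ∈ S ∧ t (j - 1) < x ∧ x ≤ t j} := by
      intro x hx
      obtain ⟨hx1, hx2⟩ := Finset.mem_filter.mp (Finset.mem_coe.mp hx)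
      obtain ⟨hxS, hxgt⟩ := Finset.mem_filter.mp hx1
      exact ⟨hxS, by omega, by omega⟩
    calc (c:ℕ) ≤ ((T (a (j-1))).filter (fun x : ℤ => x ≤ a j)).card := hcnt j hj1 hjk
      _ = (↑((T (a (j-1))).filter (fun x : ℤ => x ≤ a j)) : Set ℤ).ncard := (Set.ncard_coe_finset _).symm
      _ ≤ _ := Set.ncard_le_ncard hsub (Set.Finite.subset S.finite_toSet fun x hx => hx.1)
  refine ⟨a, hmem, (fun i h1 h2 => hgap i (by omega) h2), key3, ?_⟩
  -- bullet 4
  obtain ⟨τ, hτ0, hτk, hτmid⟩ : ∃ τ : (Fin (k-1) → ℤ) → ℕ → ℤ,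
      (∀ v, τ v 0 = 0) ∧ (∀ v, τ v k = m) ∧
      (∀ v n (i : Fin (k-1)), 1 ≤ n → n ≤ k - 1 → (i:ℕ) = n - 1 → τ v n = a n + v i) := by
    refine ⟨fun v n => if n = 0 then 0 else if n = k then m else
      a n + (if h : n - 1 < k - 1 then v ⟨n-1, h⟩ else 0), fun v => rfl, ?_, ?_⟩
    · intro v; beta_reduce; rw [if_neg (by omega : ¬ (k = 0)), if_pos rfl]
    · intro v n i h1 h2 hi
      beta_reduce
      rw [if_neg (by omega : ¬ (n = 0)), if_neg (by omega : ¬ (n = k)),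
        dif_pos (by omega : n - 1 < k - 1)]
      exact congrArg (fun z => a n + v z) (Fin.ext (show n - 1 = (i:ℕ) by omega))
  set Φ : (Fin (k-1) → ℤ) → (Fin (k+1) → ℤ) := fun v i => τ v i.1 with hΦ
  set F := Fintype.piFinset (fun _ : Fin (k-1) => Finset.Icc (0:ℤ) f) with hF
  -- properties for v ∈ F
  have hbnd : ∀ v ∈ F, ∀ n, 1 ≤ n → n ≤ k - 1 → a n ≤ τ v n ∧ τ v n ≤ a n + f := by
    intro v hv n h1 h2
    have hvi := Fintype.mem_piFinset.mp hv ⟨n-1, by omega⟩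
    rw [Finset.mem_Icc] at hvi
    rw [hτmid v n ⟨n-1, by omega⟩ h1 h2 rfl]
    constructor <;> linarith [hvi.1, hvi.2]
  have hsm : ∀ v ∈ F, StrictMono (Φ v) := by
    intro v hv
    rw [Fin.strictMono_iff_lt_succ]
    intro i
    have hival : (i.castSucc : ℕ) = i.1 := rfl
    have hisval : (i.succ : ℕ) = i.1 + 1 := rfl
    show τ v (i.castSucc : ℕ) < τ v (i.succ : ℕ)
    rw [hival, hisval]
    rcases Nat.eq_zero_or_pos i.1 with h0 | h1
    · have hb1 := (hbnd v hv 1 le_rfl (by omega)).1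
      have e1 : i.1 + 1 = 1 := by omega
      rw [e1, h0, hτ0]
      omega
    · rcases Nat.lt_or_ge (i.1 + 1) k with hlt | hge
      · have hu := (hbnd v hv i.1 h1 (by omega)).2
        have hl := (hbnd v hv (i.1+1) (by omega) (by omega)).1
        have hg := hgap (i.1+1) (by omega) (by omega)
        simp only [Nat.add_sub_cancel] at hg
        omega
      · have hik : i.1 + 1 = k := by have := i.isLt; omega
        have hu := (hbnd v hv i.1 h1 (by omega)).2
        have hg := hgap k (by omega) le_rfl
        have h5 : τ v (i.1+1) = m := by rw [hik, hτk]
        have h7 : i.1 = k - 1 := by omega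
        have h8 : a i.1 + f < a k := by rw [h7]; exact hg
        have h9 := hak
        omega
  have hmemG : ∀ v ∈ F, Φ v ∈ {t : Fin (k + 1) → ℤ | StrictMono t ∧ t 0 = 0 ∧
      t (Fin.last k) = m ∧ ∀ j : Fin k,
        c ≤ {x : ℤ | x ∈ S ∧ t j.castSucc < x ∧ x ≤ t j.succ}.ncard} := by
    intro v hv
    refine ⟨hsm v hv, ?_, ?_, ?_⟩
    · show τ v ((0 : Fin (k+1)) : ℕ) = 0
      rw [Fin.val_zero, hτ0]
    · show τ v ((Fin.last k : Fin (k+1)) : ℕ) = m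
      rw [Fin.val_last, hτk]
    · intro j
      have hkey := key3 (τ v) (hτ0 v) (hτk v) (fun n h1 h2 => hbnd v hv n h1 h2)
        (j.1 + 1) (by omega) (by omega)
      simp only [Nat.add_sub_cancel] at hkey
      have h1 : (Φ v) j.castSucc = τ v j.1 := rfl
      have h2 : (Φ v) j.succ = τ v (j.1 + 1) := rfl
      rw [h1, h2]
      exact hkey
  have hinj : Set.InjOn Φ ↑F := by
    intro v hv w hw h
    funext i
    have hie := congrFun h ⟨i.1 + 1, by omega⟩
    have h1 : Φ v ⟨i.1 + 1, by omega⟩ = τ v (i.1+1) := rfl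
    have h2 : Φ w ⟨i.1 + 1, by omega⟩ = τ w (i.1+1) := rfl
    rw [h1, h2, hτmid v (i.1+1) i (by omega) (by omega) (by omega),
      hτmid w (i.1+1) i (by omega) (by omega) (by omega)] at hie
    omega
  have hGfin : {t : Fin (k + 1) → ℤ | StrictMono t ∧ t 0 = 0 ∧
      t (Fin.last k) = m ∧ ∀ j : Fin k,
        c ≤ {x : ℤ | x ∈ S ∧ t j.castSucc < x ∧ x ≤ t j.succ}.ncard}.Finite := by
    apply Set.Finite.subset (Set.Finite.pi (fun _ : Fin (k+1) => Set.finite_Icc (0:ℤ) m))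
    rintro t ⟨hsm', h0, hlast, -⟩ i -
    refine Set.mem_Icc.mpr ⟨?_, ?_⟩
    · rw [← h0]; exact hsm'.monotone (Fin.zero_le i)
    · rw [← hlast]; exact hsm'.monotone (Fin.le_last i)
  have himg : (↑(F.image Φ) : Set (Fin (k+1) → ℤ)) ⊆ {t : Fin (k + 1) → ℤ | StrictMono t ∧
      t 0 = 0 ∧ t (Fin.last k) = m ∧ ∀ j : Fin k,
        c ≤ {x : ℤ | x ∈ S ∧ t j.castSucc < x ∧ x ≤ t j.succ}.ncard} := by
    intro x hx
    obtain ⟨v, hv, rfl⟩ := Finset.mem_image.mp (Finset.mem_coe.mp hx)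
    exact hmemG v hv
  have hFcard : F.card = (f+1).toNat ^ (k-1) := by
    rw [hF, Fintype.card_piFinset]
    simp [Int.card_Icc]
  have hcount : F.card ≤ ({t : Fin (k + 1) → ℤ | StrictMono t ∧ t 0 = 0 ∧
      t (Fin.last k) = m ∧ ∀ j : Fin k,
        c ≤ {x : ℤ | x ∈ S ∧ t j.castSucc < x ∧ x ≤ t j.succ}.ncard}).ncard := by
    calc F.card = (F.image Φ).card := (Finset.card_image_of_injOn hinj).symm
      _ = (↑(F.image Φ) : Set (Fin (k+1) → ℤ)).ncard := (Set.ncard_coe_finset _).symm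
      _ ≤ _ := Set.ncard_le_ncard himg hGfin
  have hcast : ((f+1).toNat : ℤ) = f + 1 := Int.toNat_of_nonneg (by linarith)
  calc (f + 1 : ℤ) ^ (k-1) = (((f+1).toNat ^ (k-1) : ℕ) : ℤ) := by push_cast [hcast]; ring
    _ = (F.card : ℤ) := by rw [hFcard]
    _ ≤ _ := by exact_mod_cast hcount
end
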